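/- Let σ = Σ_{k=1}^m σ_k |k⟩⟨k| be a full-rank state with simple spectrum on an m-dimensional Hilbert space, E ⊂ {1,…,m}² a set of edges, and L_E the generator L_E(X) = Σ_{(r,s)∈E}[ (σ_r/σ_s)^{1/2}(E_{ss}X − E_{sr}XE_{rs}) + (σ_s/σ_r)^{1/2}(XE_{rr} − E_{rs}XE_{sr}) ], where E_{rs} = |r⟩⟨s|. Then (i) L_E maps the algebra of diagonal matrices (in the basis {|k⟩}) into itself, and (ii) if E is irreducible (the undirected graph on vertices {1,…,m} with edge set Ẽ = E ∪ {(s,r):(r,s)∈E} is connected), then L_E is primitive, i.e. σ is the unique invariant state of the semigroup e^{−tL_{E*}}. -/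

import Mathlib

noncomputable section

open Matrix MeasureTheory
open scoped Kronecker ComplexOrder

attribute [local instance] Matrix.frobeniusNormedAddCommGroup Matrix.frobeniusNormedSpace
attribute [local instance] Classical.propDecidable

/-- Logarithm of a Hermitian matrix via the spectral functional calculus
(junk value `0` on non-Hermitian matrices). -/
def mlog {n : Type*} [Fintype n] [DecidableEq n] (A : Matrix n n ℂ) : Matrix n n ℂ :=
  if h : A.IsHermitian then h.cfc Real.log else 0

/-- Square root of a positive semidefinite matrix (junk value `0` otherwise). -/
def msqrt {n : Type*} [Fintype n] [DecidableEq n] (A : Matrix n n ℂ) : Matrix n n ℂ :=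
  if h : A.PosSemidef then
    (h.1.eigenvectorUnitary : Matrix n n ℂ) * diagonal ((↑) ∘ (√·) ∘ h.1.eigenvalues) *
      (star h.1.eigenvectorUnitary : Matrix n n ℂ)
  else 0

/-- Real power of a Hermitian matrix via the spectral functional calculus. -/
def mpow {n : Type*} [Fintype n] [DecidableEq n] (A : Matrix n n ℂ) (p : ℝ) : Matrix n n ℂ :=
  if h : A.IsHermitian then h.cfc (fun x => Real.rpow x p) else 0

/-- The map `Γ_σ(X) = σ^{1/2} X σ^{1/2}`. -/
def Gam {n : Type*} [Fintype n] [DecidableEq n] (σ X : Matrix n n ℂ) : Matrix n n ℂ :=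
  msqrt σ * X * msqrt σ

/-- A density matrix: positive semidefinite with unit trace. -/
def IsDensity {n : Type*} [Fintype n] (ρ : Matrix n n ℂ) : Prop :=
  ρ.PosSemidef ∧ ρ.trace = 1

/-- Quantum relative entropy `D(ρ‖σ) = tr(ρ(ln ρ − ln σ))`. -/
def relEnt {n : Type*} [Fintype n] [DecidableEq n] (ρ σ : Matrix n n ℂ) : ℝ :=
  ((ρ * (mlog ρ - mlog σ)).trace).re

/-- Lindblad's relative entropy for non-normalized positive operators:
`D_Lin(ρ‖σ) = tr(ρ(ln ρ − ln σ)) + tr σ − tr ρ`. -/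
def DLin {n : Type*} [Fintype n] [DecidableEq n] (ρ σ : Matrix n n ℂ) : ℝ :=
  ((ρ * (mlog ρ - mlog σ)).trace).re + (σ.trace).re - (ρ.trace).re

/-- GKLS generator (Heisenberg picture) of a detailed-balance quantum Markov semigroup:
`L(X) = −Σ_j (e^{−ω_j/2} A_j^*[X,A_j] + e^{ω_j/2}[A_j,X]A_j^*)`. -/
def lindbladGen {n : Type*} [Fintype n] {J : Type*} [Fintype J]
    (A : J → Matrix n n ℂ) (ω : J → ℝ) (X : Matrix n n ℂ) : Matrix n n ℂ :=
  -∑ j, ((Real.exp (-ω j / 2) : ℂ) • ((A j)ᴴ * (X * A j - A j * X)) +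
         (Real.exp (ω j / 2) : ℂ) • ((A j * X - X * A j) * (A j)ᴴ))

/-- Trace adjoint (Schrödinger picture generator):
`L_*(ρ) = Σ_j e^{−ω_j/2}(A_j^*A_jρ − A_jρA_j^*) + e^{ω_j/2}(ρA_jA_j^* − A_j^*ρA_j)`. -/
def lindbladStar {n : Type*} [Fintype n] {J : Type*} [Fintype J]
    (A : J → Matrix n n ℂ) (ω : J → ℝ) (ρ : Matrix n n ℂ) : Matrix n n ℂ :=
  ∑ j, ((Real.exp (-ω j / 2) : ℂ) • ((A j)ᴴ * A j * ρ - A j * ρ * (A j)ᴴ) +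
        (Real.exp (ω j / 2) : ℂ) • (ρ * (A j * (A j)ᴴ) - (A j)ᴴ * ρ * A j))

/-- Entropy production `EP_L(ρ) = tr(L_*(ρ)(ln ρ − ln σ))` (extended to
non-normalized positive `ρ`), where `σ` is the reference (invariant) state. -/
def EP {n : Type*} [Fintype n] [DecidableEq n] {J : Type*} [Fintype J]
    (A : J → Matrix n n ℂ) (ω : J → ℝ) (σ ρ : Matrix n n ℂ) : ℝ :=
  ((lindbladStar A ω ρ * (mlog ρ - mlog σ)).trace).re

/-- Modified logarithmic Sobolev constant of a primitive semigroup with invariant state `σ`: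
the largest `α` with `α D(ρ‖σ) ≤ EP_L(ρ)` for all densities `ρ`. -/
def mlsiConst {n : Type*} [Fintype n] [DecidableEq n] {J : Type*} [Fintype J]
    (A : J → Matrix n n ℂ) (ω : J → ℝ) (σ : Matrix n n ℂ) : ℝ :=
  sSup {α : ℝ | ∀ ρ : Matrix n n ℂ, IsDensity ρ → α * relEnt ρ σ ≤ EP A ω σ ρ}

/-- Partial trace over the first tensor factor. -/
def ptraceFst {n m : Type*} [Fintype n] (ρ : Matrix (n × m) (n × m) ℂ) : Matrix m m ℂ :=
  Matrix.of fun a b => ∑ i, ρ (i, a) (i, b)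

/-- Partial trace over the second tensor factor. -/
def ptraceSnd {n m : Type*} [Fintype m] (ρ : Matrix (n × m) (n × m) ℂ) : Matrix n n ℂ :=
  Matrix.of fun i j => ∑ a, ρ (i, a) (j, a)

/-- Complete modified logarithmic Sobolev constant (primitive case): the largest `α` with
`α D(ρ‖(E_*⊗id_R)(ρ)) ≤ EP_{L⊗id_R}(ρ)` for every finite-dimensional reference system `R`
and every density `ρ` on `H ⊗ H_R`; here `(E_*⊗id_R)(ρ) = σ ⊗ tr_H ρ`. -/
def clsiConst {n : Type*} [Fintype n] [DecidableEq n] {J : Type*} [Fintype J]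
    (A : J → Matrix n n ℂ) (ω : J → ℝ) (σ : Matrix n n ℂ) : ℝ :=
  sSup {α : ℝ | ∀ (r : ℕ) (ρ : Matrix (n × Fin r) (n × Fin r) ℂ), IsDensity ρ →
    α * relEnt ρ (σ ⊗ₖ ptraceFst ρ) ≤
      EP (fun j => A j ⊗ₖ (1 : Matrix (Fin r) (Fin r) ℂ)) ω (σ ⊗ₖ ptraceFst ρ) ρ}

/-- `Φ ⊗ id` of a superoperator `Φ`, acting on matrices over a product index set. -/
def tensorIdFun {n m : Type*} (Φ : Matrix n n ℂ → Matrix n n ℂ)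
    (ρ : Matrix (n × m) (n × m) ℂ) : Matrix (n × m) (n × m) ℂ :=
  Matrix.of fun p q => Φ (Matrix.of fun i j => ρ (i, p.2) (j, q.2)) p.1 q.1

/-- Double operator integral `[ρ]_ω^{-1} = ∫_0^∞ (r + e^{−ω/2}L_ρ)^{−1}(r + e^{ω/2}R_ρ)^{−1} dr`
applied to `X`. -/
def doiInv {n : Type*} [Fintype n] [DecidableEq n] (ρ : Matrix n n ℂ) (ω : ℝ)
    (X : Matrix n n ℂ) : Matrix n n ℂ :=
  ∫ r in Set.Ioi (0 : ℝ),
    ((r : ℂ) • (1 : Matrix n n ℂ) + (Real.exp (-ω / 2) : ℂ) • ρ)⁻¹ * X *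
      ((r : ℂ) • (1 : Matrix n n ℂ) + (Real.exp (ω / 2) : ℂ) • ρ)⁻¹

/-- Operator (spectral) norm `‖X‖_∞` of a matrix. -/
def opN {n : Type*} [Fintype n] [DecidableEq n] (X : Matrix n n ℂ) : ℝ :=
  ‖Matrix.toEuclideanCLM (𝕜 := ℂ) X‖


/-- The generator `L_E` associated to a set of edges `E` and a nondegenerate full-rank state
with eigenvalues `s`:
`L_E(X) = Σ_{(r,s)∈E} [(σ_r/σ_s)^{1/2}(E_{ss}X − E_{sr}XE_{rs}) + (σ_s/σ_r)^{1/2}(XE_{rr} − E_{rs}XE_{sr})]`. -/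
def LEgen {m : ℕ} (E : Finset (Fin m × Fin m)) (s : Fin m → ℝ)
    (X : Matrix (Fin m) (Fin m) ℂ) : Matrix (Fin m) (Fin m) ℂ :=
  ∑ e ∈ E,
    ((Real.sqrt (s e.1 / s e.2) : ℂ) •
        (Matrix.single e.2 e.2 1 * X -
          Matrix.single e.2 e.1 1 * X * Matrix.single e.1 e.2 1) +
      (Real.sqrt (s e.2 / s e.1) : ℂ) •
        (X * Matrix.single e.1 e.1 1 -
          Matrix.single e.1 e.2 1 * X * Matrix.single e.2 e.1 1))

/-- The trace adjoint (Schrödinger picture) of `L_E`, with Lindblad operators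
`E_{rs}, E_{sr}` for `(r,s) ∈ E` and Bohr frequencies `ω_{rs} = ln σ_s − ln σ_r`. -/
def LEstar {m : ℕ} (E : Finset (Fin m × Fin m)) (s : Fin m → ℝ)
    (ρ : Matrix (Fin m) (Fin m) ℂ) : Matrix (Fin m) (Fin m) ℂ :=
  ∑ e ∈ E,
    ((Real.sqrt (s e.1 / s e.2) : ℂ) •
        (Matrix.single e.2 e.2 1 * ρ + ρ * Matrix.single e.2 e.2 1 -
          2 • (Matrix.single e.1 e.2 1 * ρ * Matrix.single e.2 e.1 1)) +
      (Real.sqrt (s e.2 / s e.1) : ℂ) •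
        (Matrix.single e.1 e.1 1 * ρ + ρ * Matrix.single e.1 e.1 1 -
          2 • (Matrix.single e.2 e.1 1 * ρ * Matrix.single e.1 e.2 1)))

/-- A set of edges `E ⊂ {1,…,m}²` is irreducible if the undirected graph on `{1,…,m}` with
edge set `Ẽ = E ∪ {(s,r) : (r,s) ∈ E}` is connected. -/
def IsIrreducibleEdgeSet {m : ℕ} (E : Finset (Fin m × Fin m)) : Prop :=
  (SimpleGraph.fromRel fun a b => (a, b) ∈ E).Connected

/-!
Off the diagonal `L_*` acts by multiplication: `L_*(ρ)_{ij} = (κ_i + κ_j) ρ_{ij}` for `i ≠ j`,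
where `κ_k` is the total rate of the edges at `k`, positive at every vertex of a connected graph
with at least two vertices. So an invariant state is diagonal, `ρ = diag(σ_k q_k)`, and on such
states `L_*` is a graph Laplacian acting on `q` with conductances `√(σ_r σ_s)`: pairing with
`diag(q)` gives the Dirichlet form `Σ_{(r,s) ∈ E} 2 √(σ_r σ_s) (q_s - q_r)²`. It vanishes only
if `q` is constant on the connected graph, and `tr ρ = 1` forces `q ≡ 1`.
-/

theorem SimpleGraph.Preconnected.apply_eq_of_forall_adj {V α : Type*} {G : SimpleGraph V}
    (hG : G.Preconnected) {f : V → α} (h : ∀ a b, G.Adj a b → f a = f b) (a b : V) :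
    f a = f b := by
  obtain ⟨w⟩ := hG a b
  induction w with
  | nil => rfl
  | cons hadj _ ih => exact (h _ _ hadj).trans ih

theorem Real.sqrt_div_mul_eq_sqrt_mul {a : ℝ} (ha : 0 ≤ a) (b : ℝ) :
    √(a / b) * b = √(a * b) := by
  rw [Real.sqrt_div ha, Real.sqrt_mul ha, div_mul_eq_mul_div, mul_div_assoc, Real.div_sqrt]

namespace Matrix

variable {n R : Type*}

theorem isDiag_sum [AddCommMonoid R] {ι : Type*} (t : Finset ι) {A : ι → Matrix n n R}
    (h : ∀ i ∈ t, (A i).IsDiag) : (∑ i ∈ t, A i).IsDiag :=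
  Finset.sum_induction _ IsDiag (fun _ _ => IsDiag.add) isDiag_zero h

variable [DecidableEq n]

theorem single_eq_smul_single_one [MulZeroOneClass R] (i j : n) (c : R) :
    single i j c = c • single i j 1 := by
  rw [smul_single, smul_eq_mul, mul_one]

theorem IsHermitian.eq_diagonal_re {A : Matrix n n ℂ} (hA : A.IsHermitian) (hd : A.IsDiag) :
    A = diagonal fun k => ((A k k).re : ℂ) := by
  conv_lhs => rw [← hd.diagonal_diag]
  exact congrArg diagonal (funext fun k => (hA.coe_re_apply_self k).symm)

variable [Fintype n]

theorem single_mul_diagonal [NonUnitalNonAssocSemiring R] (i j : n) (c : R) (d : n → R) :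
    single i j c * diagonal d = single i j (c * d j) := by
  ext a b
  rw [mul_diagonal, single_apply, single_apply]
  split_ifs with h <;> [simp [← h.2]; simp]

theorem diagonal_mul_single [NonUnitalNonAssocSemiring R] (i j : n) (c : R) (d : n → R) :
    diagonal d * single i j c = single i j (d i * c) := by
  ext a b
  rw [diagonal_mul, single_apply, single_apply]
  split_ifs with h <;> [simp [← h.1]; simp]

end Matrix

open Matrix

section LE

variable {m : ℕ} (E : Finset (Fin m × Fin m)) (s : Fin m → ℝ)

def escapeRate : Fin m → ℝ :=
  ∑ e ∈ E, (Pi.single e.2 √(s e.1 / s e.2) + Pi.single e.1 √(s e.2 / s e.1))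

theorem LEstar_apply_of_ne (ρ : Matrix (Fin m) (Fin m) ℂ) {i j : Fin m} (hij : i ≠ j) :
    LEstar E s ρ i j = ((escapeRate E s i + escapeRate E s j : ℝ) : ℂ) * ρ i j := by
  simp only [LEstar, escapeRate, Matrix.sum_apply, Finset.sum_apply, ← Finset.sum_add_distrib,
    Complex.ofReal_sum, Finset.sum_mul]
  refine Finset.sum_congr rfl fun e _ => ?_
  have hoff : ∀ a (x : ℂ), single a a x i j = 0 := fun a x => by
    rw [single_apply_of_ne]; rintro ⟨rfl, rfl⟩; exact hij rfl
  simp only [Matrix.add_apply, Matrix.sub_apply, Matrix.smul_apply, single_mul_mul_single, hoff,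
    smul_zero, sub_zero]
  simp only [← diagonal_single, diagonal_mul, mul_diagonal, Pi.single_apply, Pi.add_apply,
    smul_eq_mul]
  split_ifs <;> push_cast <;> ring

theorem isDiag_LEgen_diagonal (d : Fin m → ℂ) : (LEgen E s (diagonal d)).IsDiag := by
  refine isDiag_sum _ fun e _ => ?_
  simp only [single_mul_diagonal, single_mul_single_same, ← diagonal_single,
    diagonal_mul_diagonal]
  exact (((isDiag_diagonal _).sub (isDiag_diagonal _)).smul _).add
    (((isDiag_diagonal _).sub (isDiag_diagonal _)).smul _)

theorem LEstar_diagonal (d : Fin m → ℂ) :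
    LEstar E s (diagonal d) = ∑ e ∈ E,
      (2 * ((√(s e.1 / s e.2) : ℂ) * d e.2 - (√(s e.2 / s e.1) : ℂ) * d e.1)) •
        (single e.2 e.2 1 - single e.1 e.1 1) := by
  refine Finset.sum_congr rfl fun e _ => ?_
  simp only [single_mul_diagonal, diagonal_mul_single, single_mul_single_same, one_mul, mul_one]
  simp only [single_eq_smul_single_one _ _ (d _)]
  module

variable {s}

theorem escapeRate_pos (hs : ∀ i, 0 < s i) {i j : Fin m} (h : (i, j) ∈ E ∨ (j, i) ∈ E) :
    0 < escapeRate E s i := by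
  have hsingle : ∀ a x, 0 ≤ x → 0 ≤ (Pi.single a x : Fin m → ℝ) i :=
    fun a _ hx => by rw [Pi.single_apply]; split_ifs <;> [exact hx; exact le_rfl]
  have hsqrt : ∀ a b, 0 < √(s a / s b) := fun a b => Real.sqrt_pos.2 (div_pos (hs a) (hs b))
  rw [escapeRate, Finset.sum_apply]
  refine Finset.sum_pos' (fun e _ => add_nonneg (hsingle _ _ (Real.sqrt_nonneg _))
    (hsingle _ _ (Real.sqrt_nonneg _))) ?_
  rcases h with h | h
  · exact ⟨_, h, add_pos_of_nonneg_of_pos (hsingle _ _ (Real.sqrt_nonneg _))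
      (by simpa using hsqrt j i)⟩
  · exact ⟨_, h, add_pos_of_pos_of_nonneg (by simpa using hsqrt j i)
      (hsingle _ _ (Real.sqrt_nonneg _))⟩

theorem trace_diagonal_mul_LEstar_diagonal (hs : ∀ i, 0 < s i) (q : Fin m → ℝ) :
    trace (diagonal (fun k => (q k : ℂ)) *
        LEstar E s (diagonal fun k => ((s k * q k : ℝ) : ℂ))) =
      ((∑ e ∈ E, 2 * √(s e.1 * s e.2) * (q e.2 - q e.1) ^ 2 : ℝ) : ℂ) := by
  rw [LEstar_diagonal, Finset.mul_sum, trace_sum, Complex.ofReal_sum]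
  refine Finset.sum_congr rfl fun e _ => ?_
  have hflux : √(s e.1 / s e.2) * (s e.2 * q e.2) - √(s e.2 / s e.1) * (s e.1 * q e.1) =
      √(s e.1 * s e.2) * (q e.2 - q e.1) := by
    rw [← mul_assoc, ← mul_assoc, Real.sqrt_div_mul_eq_sqrt_mul (hs _).le,
      Real.sqrt_div_mul_eq_sqrt_mul (hs _).le, mul_comm (s e.2)]
    ring
  rw [mul_smul_comm, trace_smul, Matrix.mul_sub, trace_sub, diagonal_mul_single,
    diagonal_mul_single, trace_single_eq_same, trace_single_eq_same, smul_eq_mul]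
  have hflux' := congrArg ((↑) : ℝ → ℂ) hflux
  push_cast at hflux' ⊢
  linear_combination 2 * ((q e.2 : ℂ) - q e.1) * hflux'

variable {E}

theorem isDiag_of_LEstar_eq_zero (hs : ∀ i, 0 < s i) (hE : IsIrreducibleEdgeSet E)
    {ρ : Matrix (Fin m) (Fin m) ℂ} (hL : LEstar E s ρ = 0) : ρ.IsDiag := by
  intro i j hij
  have : Nontrivial (Fin m) := ⟨⟨i, j, hij⟩⟩
  have hrate : ∀ k, 0 < escapeRate E s k := fun k => by
    obtain ⟨l, hkl⟩ := hE.preconnected.exists_adj_of_nontrivial k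
    exact escapeRate_pos E hs ((SimpleGraph.fromRel_adj _ _ _).1 hkl).2
  have h := LEstar_apply_of_ne E s ρ hij
  rw [hL, Matrix.zero_apply, eq_comm, mul_eq_zero] at h
  exact h.resolve_left (Complex.ofReal_ne_zero.2 (add_pos (hrate i) (hrate j)).ne')

theorem eq_of_LEstar_diagonal_eq_zero (hs : ∀ i, 0 < s i) (hE : IsIrreducibleEdgeSet E)
    {q : Fin m → ℝ} (h : LEstar E s (diagonal fun k => ((s k * q k : ℝ) : ℂ)) = 0)
    (a b : Fin m) : q a = q b := by
  have hsum : ∑ e ∈ E, 2 * √(s e.1 * s e.2) * (q e.2 - q e.1) ^ 2 = 0 := by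
    have h0 := trace_diagonal_mul_LEstar_diagonal E hs q
    rw [h, Matrix.mul_zero, trace_zero] at h0
    exact_mod_cast h0.symm
  have hedge : ∀ e ∈ E, q e.1 = q e.2 := fun e he => by
    have hterm := (Finset.sum_eq_zero_iff_of_nonneg (fun e _ => by positivity)).1 hsum e he
    have hw : 0 < 2 * √(s e.1 * s e.2) := by
      have := Real.sqrt_pos.2 (mul_pos (hs e.1) (hs e.2))
      positivity
    rw [mul_eq_zero, or_iff_right hw.ne', sq_eq_zero_iff, sub_eq_zero] at hterm
    exact hterm.symm
  refine hE.preconnected.apply_eq_of_forall_adj (fun a b hab => ?_) a b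
  rcases ((SimpleGraph.fromRel_adj _ _ _).1 hab).2 with he | he
  exacts [hedge _ he, (hedge _ he).symm]

end LE

theorem LE_diag_invariant_and_primitive_general {m : ℕ}
    (E : Finset (Fin m × Fin m)) (s : Fin m → ℝ)
    (hs : ∀ i, 0 < s i) (hsum : ∑ i, s i = 1) :
    (∀ D : Fin m → ℂ, ∃ D' : Fin m → ℂ,
        LEgen E s (Matrix.diagonal D) = Matrix.diagonal D') ∧
      (IsIrreducibleEdgeSet E →
        ∀ ρ : Matrix (Fin m) (Fin m) ℂ, IsDensity ρ → LEstar E s ρ = 0 →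
          ρ = Matrix.diagonal fun i => (s i : ℂ)) := by
  refine ⟨fun D => ⟨_, (isDiag_LEgen_diagonal E s D).diagonal_diag.symm⟩, ?_⟩
  rintro hE ρ ⟨hpos, htr⟩ hL
  set q : Fin m → ℝ := fun k => (ρ k k).re / s k
  have hρ : ρ = diagonal fun k => ((s k * q k : ℝ) : ℂ) := by
    simp only [q, mul_div_cancel₀ _ (hs _).ne']
    exact hpos.isHermitian.eq_diagonal_re (isDiag_of_LEstar_eq_zero hs hE hL)
  have hq := eq_of_LEstar_diagonal_eq_zero hs hE (hρ ▸ hL)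
  obtain ⟨k₀⟩ := hE.nonempty
  have hq₀ : q k₀ = 1 := by
    rw [hρ, trace_diagonal] at htr
    have htr' : ∑ k, s k * q k = 1 := by exact_mod_cast htr
    simpa only [hq _ k₀, ← Finset.sum_mul, hsum, one_mul] using htr'
  rw [hρ]
  simp only [hq _ k₀, hq₀, mul_one]

/-- **Lemma `erg2`:** `L_E` leaves the diagonal algebra invariant, and if `E` is
irreducible then `L_E` is primitive: the only invariant density of `e^{-tL_{E*}}` is
`σ = Σ_k σ_k |k⟩⟨k|`. -/
theorem LE_diag_invariant_and_primitive {m : ℕ}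
    (E : Finset (Fin m × Fin m)) (s : Fin m → ℝ)
    (hs : ∀ i, 0 < s i) (hsum : ∑ i, s i = 1) (hsimple : Function.Injective s) :
    (∀ D : Fin m → ℂ, ∃ D' : Fin m → ℂ,
        LEgen E s (Matrix.diagonal D) = Matrix.diagonal D') ∧
      (IsIrreducibleEdgeSet E →
        ∀ ρ : Matrix (Fin m) (Fin m) ℂ, IsDensity ρ → LEstar E s ρ = 0 →
          ρ = Matrix.diagonal fun i => (s i : ℂ)) :=
  LE_diag_invariant_and_primitive_general E s hs hsum
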